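/- If G is a finite König–Egerváry graph, then the critical difference of G equals the deficiency of G: d(G) = |V(G)| − 2μ(G). -/

import Mathlib

/-!
Fix a maximum matching `M`. Sending each matched vertex of a set `T` to its partner is an
injection of `T ∩ V(M)` into `N(T)`, and the remaining vertices of `T` are unmatched, so
`|T| - |N(T)| ≤ |V| - 2μ(G)` for every `T`. Conversely a maximum independent set `S` has
`N(S) ⊆ V \ S`, so `d(G) ≥ 2α(G) - |V|`, which is `|V| - 2μ(G)` when `|V| = α(G) + μ(G)`.
-/

namespace KEPaper

open SimpleGraph

variable {V : Type*}

/-- `nbhd G S` is the set of vertices having a neighbor in `S`. -/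
def nbhd (G : SimpleGraph V) (S : Set V) : Set V := {v | ∃ w ∈ S, G.Adj v w}

/-- `S` is an independent set of `G`: no two vertices of `S` are adjacent. -/
def IsIndep (G : SimpleGraph V) (S : Set V) : Prop :=
  S.Pairwise fun u v => ¬ G.Adj u v

/-- The independence number `α(G)`: maximum cardinality of an independent set. -/
noncomputable def indepNum (G : SimpleGraph V) : ℕ :=
  sSup {n | ∃ S : Set V, IsIndep G S ∧ S.ncard = n}

/-- The matching number `μ(G)`: maximum cardinality of a matching. -/
noncomputable def matchNum (G : SimpleGraph V) : ℕ :=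
  sSup {n | ∃ M : Subgraph G, M.IsMatching ∧ M.edgeSet.ncard = n}

/-- `S` is a maximum independent set of `G`. -/
def IsMaxIndep (G : SimpleGraph V) (S : Set V) : Prop :=
  IsIndep G S ∧ S.ncard = indepNum G

/-- The critical difference `d(G) = max {|S| - |N(S)| : S independent}`. -/
noncomputable def critDiff (G : SimpleGraph V) : ℤ :=
  sSup {d : ℤ | ∃ S : Set V, IsIndep G S ∧ d = (S.ncard : ℤ) - ((nbhd G S).ncard : ℤ)}

/-- `S` is a critical independent set: independent with `|S| - |N(S)| = d(G)`. -/
def IsCritIndep (G : SimpleGraph V) (S : Set V) : Prop :=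
  IsIndep G S ∧ (S.ncard : ℤ) - ((nbhd G S).ncard : ℤ) = critDiff G

/-- `core G` is the intersection of all maximum independent sets of `G`. -/
def core (G : SimpleGraph V) : Set V := ⋂ S ∈ {S : Set V | IsMaxIndep G S}, S

/-- `G` is a König–Egerváry graph: `|V(G)| = α(G) + μ(G)`. -/
def KoenigEgervary (G : SimpleGraph V) : Prop :=
  Nat.card V = indepNum G + matchNum G

/-- `A` is a local maximum independent set of `G`: it is a maximum independent
set of the subgraph of `G` induced by `N[A] = A ∪ N(A)`. -/
def IsLocalMaxIndep (G : SimpleGraph V) (A : Set V) : Prop :=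
  IsMaxIndep (G.induce (A ∪ nbhd G A)) {x : ↥(A ∪ nbhd G A) | ↑x ∈ A}

section

variable {G : SimpleGraph V}

theorem _root_.SimpleGraph.Subgraph.IsMatching.ncard_verts [Finite V] {M : G.Subgraph}
    (hM : M.IsMatching) : M.verts.ncard = 2 * M.edgeSet.ncard := by
  classical
  have := Fintype.ofFinite V
  have hedges : M.coe.edgeSet.ncard = M.edgeSet.ncard := by
    rw [← Subgraph.image_coe_edgeSet_coe,
      Set.ncard_image_of_injective _ (Sym2.map.injective Subtype.val_injective)]
  rw [← hedges, ← coe_edgeFinset, Set.ncard_coe_finset, ← sum_degrees_eq_twice_card_edges,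
    ← Nat.card_coe_set_eq, Nat.card_eq_fintype_card, Fintype.card_eq_sum_ones]
  refine Finset.sum_congr rfl fun v _ => ?_
  rw [M.coe_degree]
  convert ((Subgraph.isMatching_iff_forall_degree.mp hM) v v.2).symm

theorem exists_isIndep_ncard_eq_indepNum [Finite V] (G : SimpleGraph V) :
    ∃ S, IsIndep G S ∧ S.ncard = indepNum G :=
  Nat.sSup_mem (s := {n | ∃ S : Set V, IsIndep G S ∧ S.ncard = n})
    ⟨0, ∅, by simp [IsIndep], Set.ncard_empty V⟩
    ⟨Nat.card V, by rintro _ ⟨S, -, rfl⟩; exact Set.ncard_le_card S⟩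

theorem exists_isMatching_ncard_eq_matchNum [Finite V] (G : SimpleGraph V) :
    ∃ M : G.Subgraph, M.IsMatching ∧ M.edgeSet.ncard = matchNum G :=
  Nat.sSup_mem (s := {n | ∃ M : G.Subgraph, M.IsMatching ∧ M.edgeSet.ncard = n})
    ⟨0, ⊥, fun _ hv => hv.elim, by simp⟩
    ⟨Nat.card (Sym2 V), by rintro _ ⟨M, -, rfl⟩; exact Set.ncard_le_card _⟩

theorem ncard_inter_verts_le_ncard_nbhd [Finite V] {M : G.Subgraph} (hM : M.IsMatching)
    (T : Set V) : (T ∩ M.verts).ncard ≤ (nbhd G T).ncard := by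
  classical
  let partner (v : V) : V := if hv : v ∈ M.verts then (hM hv).choose else v
  have hpartner {v : V} (hv : v ∈ M.verts) : M.Adj v (partner v) := by
    simpa only [partner, dif_pos hv] using (hM hv).choose_spec.1
  refine Set.ncard_le_ncard_of_injOn partner
    (fun v ⟨hvT, hvM⟩ => ⟨v, hvT, (M.adj_sub (hpartner hvM)).symm⟩) ?_
  intro a ⟨_, haM⟩ b ⟨_, hbM⟩ hab
  exact hM.eq_of_adj_right (hpartner haM) (hab ▸ hpartner hbM)

theorem ncard_sub_ncard_nbhd_le_card_sub_ncard_verts [Finite V] {M : G.Subgraph}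
    (hM : M.IsMatching) (T : Set V) :
    (T.ncard : ℤ) - (nbhd G T).ncard ≤ Nat.card V - M.verts.ncard := by
  have hmatched := ncard_inter_verts_le_ncard_nbhd hM T
  have hunmatched : (T \ M.verts).ncard ≤ M.vertsᶜ.ncard :=
    Set.ncard_le_ncard fun _ hv => hv.2
  have hsplit := Set.ncard_inter_add_ncard_sdiff_eq_ncard T M.verts
  have hcompl := Set.ncard_add_ncard_compl M.verts
  omega

theorem ncard_sub_ncard_nbhd_le_deficiency [Finite V] (T : Set V) :
    (T.ncard : ℤ) - (nbhd G T).ncard ≤ Nat.card V - 2 * matchNum G := by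
  obtain ⟨M, hM, hcard⟩ := exists_isMatching_ncard_eq_matchNum G
  have := ncard_sub_ncard_nbhd_le_card_sub_ncard_verts hM T
  rwa [hM.ncard_verts, hcard, Nat.cast_mul, Nat.cast_ofNat] at this

theorem critDiff_le_deficiency [Finite V] (G : SimpleGraph V) :
    critDiff G ≤ Nat.card V - 2 * matchNum G :=
  csSup_le ⟨0, ∅, by simp [IsIndep], by simp [nbhd]⟩ <| by
    rintro _ ⟨T, -, rfl⟩
    exact ncard_sub_ncard_nbhd_le_deficiency T

theorem ncard_sub_ncard_nbhd_le_critDiff [Finite V] {S : Set V} (hS : IsIndep G S) :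
    (S.ncard : ℤ) - (nbhd G S).ncard ≤ critDiff G :=
  le_csSup ⟨_, by rintro _ ⟨T, -, rfl⟩; exact ncard_sub_ncard_nbhd_le_deficiency T⟩
    ⟨S, hS, rfl⟩

theorem nbhd_subset_compl {S : Set V} (hS : IsIndep G S) : nbhd G S ⊆ Sᶜ :=
  fun _ ⟨_, hwS, hadj⟩ hvS => hS hvS hwS hadj.ne hadj

theorem two_mul_indepNum_sub_card_le_critDiff [Finite V] (G : SimpleGraph V) :
    2 * (indepNum G : ℤ) - Nat.card V ≤ critDiff G := by
  obtain ⟨S, hS, hcard⟩ := exists_isIndep_ncard_eq_indepNum G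
  have hnbhd : (nbhd G S).ncard ≤ Sᶜ.ncard := Set.ncard_le_ncard (nbhd_subset_compl hS)
  have hcompl := Set.ncard_add_ncard_compl S
  have hcrit := ncard_sub_ncard_nbhd_le_critDiff hS
  omega

end

/-- If `G` is a finite König–Egerváry graph, then `d(G) = |V(G)| - 2μ(G)`,
the deficiency of `G`. -/
theorem critDiff_eq_deficiency [Finite V] (G : SimpleGraph V)
    (hG : KoenigEgervary G) :
    critDiff G = (Nat.card V : ℤ) - 2 * (matchNum G : ℤ) := by
  have hcard : (Nat.card V : ℤ) = indepNum G + matchNum G := by exact_mod_cast hG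
  have hlower := two_mul_indepNum_sub_card_le_critDiff G
  exact le_antisymm (critDiff_le_deficiency G) (by omega)

end KEPaper
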